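/- arXiv:0804.0436 — 2 statements merged into one kernel-verified Lean document; each statement's English description precedes it below -/
import Mathlib

section
/- Let (Ψ₁,Ψ₂,Ψ₃) be the standard paraquaternionic structure on V, let κ₀ ∈ ℝ and ξᵢⱼ ∈ ℝ (1 ≤ i ≤ j ≤ 3), and let A_{κ₀,ξ} = κ₀A⁰ + (1/3)(ξ₁₁A^{Ψ₁} + ξ₂₂A^{Ψ₂} + ξ₃₃A^{Ψ₃} + ξ₁₂A^{Ψ₁+Ψ₂} + ξ₁₃A^{Ψ₁+Ψ₃} + ξ₂₃A^{Ψ₂+Ψ₃}). Then the model 𝔐_{κ₀,ξ} = (V,⟨·,·⟩,A_{κ₀,ξ}) is both spacelike Jordan Osserman and timelike Jordan Osserman. -/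
open Matrix BigOperators

/-- `V = ℝ⁴`. -/
abbrev V4 : Type := Fin 4 → ℝ

/-- The neutral inner product of signature (2,2):
`⟨x,y⟩ = −x₁y₁ − x₂y₂ + x₃y₃ + x₄y₄`. -/
def nip (x y : V4) : ℝ := -(x 0 * y 0) - x 1 * y 1 + x 2 * y 2 + x 3 * y 3

/-- The signs `ε₁ = ε₂ = −1`, `ε₃ = ε₄ = 1`. -/
def eps : Fin 4 → ℝ := ![-1, -1, 1, 1]

/-- The standard basis vectors `e i`. -/
def stdb (i : Fin 4) : V4 := fun j => if j = i then 1 else 0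

/-- A 4-linear map `A : V⁴ → ℝ` (linearity in each slot). -/
def IsMultilinear (A : V4 → V4 → V4 → V4 → ℝ) : Prop :=
  (∀ (c : ℝ) (x x' y z w : V4), A (c • x + x') y z w = c * A x y z w + A x' y z w) ∧
  (∀ (c : ℝ) (x y y' z w : V4), A x (c • y + y') z w = c * A x y z w + A x y' z w) ∧
  (∀ (c : ℝ) (x y z z' w : V4), A x y (c • z + z') w = c * A x y z w + A x y z' w) ∧
  (∀ (c : ℝ) (x y z w w' : V4), A x y z (c • w + w') = c * A x y z w + A x y z w')

/-- Curvature symmetries: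
`A(x,y,z,v) = −A(y,x,z,v) = A(z,v,x,y)` and the first Bianchi identity. -/
def HasCurvSym (A : V4 → V4 → V4 → V4 → ℝ) : Prop :=
  (∀ x y z w, A x y z w = - A y x z w) ∧
  (∀ x y z w, A x y z w = A z w x y) ∧
  (∀ x y z w, A x y z w + A y z x w + A z x y w = 0)

/-- An algebraic curvature tensor on `(V,⟨·,·⟩)`. -/
def IsModel (A : V4 → V4 → V4 → V4 → ℝ) : Prop := IsMultilinear A ∧ HasCurvSym A

/-- The Jacobi operator `J_A(x)`, as a matrix: it is the unique linear map with
`⟨J_A(x)y, z⟩ = A(y,x,x,z)`; its matrix entries are `J i j = ε i * A(e j, x, x, e i)`. -/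
def jacobi (A : V4 → V4 → V4 → V4 → ℝ) (x : V4) : Matrix (Fin 4) (Fin 4) ℝ :=
  Matrix.of fun i j => eps i * A (stdb j) x x (stdb i)

/-- Two endomorphisms of `V` are similar (conjugate by an invertible linear map). -/
def SimilarMat4 (M N : Matrix (Fin 4) (Fin 4) ℝ) : Prop :=
  ∃ L : Matrix (Fin 4) (Fin 4) ℝ, IsUnit L.det ∧ M * L = L * N

/-- Spacelike Osserman: the characteristic polynomial of `J_A` is constant on
unit spacelike vectors. -/
def SpacelikeOsserman (A : V4 → V4 → V4 → V4 → ℝ) : Prop :=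
  ∀ u w : V4, nip u u = 1 → nip w w = 1 → (jacobi A u).charpoly = (jacobi A w).charpoly

/-- Timelike Osserman: the characteristic polynomial of `J_A` is constant on
unit timelike vectors. -/
def TimelikeOsserman (A : V4 → V4 → V4 → V4 → ℝ) : Prop :=
  ∀ u w : V4, nip u u = -1 → nip w w = -1 → (jacobi A u).charpoly = (jacobi A w).charpoly

/-- Null Osserman: `J_A(v)` is nilpotent for every null vector `v`. -/
def NullOsserman (A : V4 → V4 → V4 → V4 → ℝ) : Prop :=
  ∀ v : V4, nip v v = 0 → IsNilpotent (jacobi A v)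

/-- Spacelike Jordan Osserman: the Jordan normal form of `J_A` is constant on
unit spacelike vectors. -/
def SpacelikeJordanOsserman (A : V4 → V4 → V4 → V4 → ℝ) : Prop :=
  ∀ u w : V4, nip u u = 1 → nip w w = 1 → SimilarMat4 (jacobi A u) (jacobi A w)

/-- Timelike Jordan Osserman. -/
def TimelikeJordanOsserman (A : V4 → V4 → V4 → V4 → ℝ) : Prop :=
  ∀ u w : V4, nip u u = -1 → nip w w = -1 → SimilarMat4 (jacobi A u) (jacobi A w)

/-- Null Jordan Osserman: the Jordan normal form of `J_A` is constant on
nonzero null vectors. -/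
def NullJordanOsserman (A : V4 → V4 → V4 → V4 → ℝ) : Prop :=
  ∀ u w : V4, u ≠ 0 → w ≠ 0 → nip u u = 0 → nip w w = 0 →
    SimilarMat4 (jacobi A u) (jacobi A w)

/-- The Ricci tensor `ρ_A(x,y) = Σᵢ εᵢ A(eᵢ,x,y,eᵢ)`. -/
def ricci (A : V4 → V4 → V4 → V4 → ℝ) (x y : V4) : ℝ :=
  ∑ i : Fin 4, eps i * A (stdb i) x y (stdb i)

/-- Einstein: `ρ_A = c⟨·,·⟩`. -/
def Einstein (A : V4 → V4 → V4 → V4 → ℝ) : Prop :=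
  ∃ c : ℝ, ∀ x y : V4, ricci A x y = c * nip x y

/-- The scalar curvature `τ_A = Σᵢ εᵢ ρ_A(eᵢ,eᵢ)`. -/
def scal (A : V4 → V4 → V4 → V4 → ℝ) : ℝ :=
  ∑ i : Fin 4, eps i * ricci A (stdb i) (stdb i)

/-- The Weyl tensor. -/
noncomputable def weyl (A : V4 → V4 → V4 → V4 → ℝ) (x y z v : V4) : ℝ :=
  A x y z v + (scal A / 6) * (nip y z * nip x v - nip x z * nip y v)
    - (1/2) * (ricci A y z * nip x v - ricci A x z * nip y v
        + ricci A x v * nip y z - ricci A y v * nip x z)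

/-- A 2-vector `x ∧ y`, represented by its antisymmetric coefficient matrix. -/
def wedge (x y : V4) : Matrix (Fin 4) (Fin 4) ℝ :=
  Matrix.of fun i j => x i * y j - x j * y i

/-- The Weyl tensor as a symmetric bilinear form on 2-vectors, determined by
`W_A(x∧y, z∧v) = W_A(x,y,z,v)`. -/
noncomputable def weylForm (A : V4 → V4 → V4 → V4 → ℝ) (α β : Matrix (Fin 4) (Fin 4) ℝ) : ℝ :=
  (1/4) * ∑ i : Fin 4, ∑ j : Fin 4, ∑ k : Fin 4, ∑ l : Fin 4,
    α i j * β k l * weyl A (stdb i) (stdb j) (stdb k) (stdb l)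

/-- `E₁^ε = (1/√2)(e₁∧e₂ + ε e₃∧e₄)`, `E₂^ε = (1/√2)(e₁∧e₃ + ε e₂∧e₄)`,
`E₃^ε = (1/√2)(e₁∧e₄ − ε e₂∧e₃)`.  For `ε = 1` this is the standard basis of the
self-dual 2-vectors `Λ⁺`; for `ε = −1`, of the anti-self-dual 2-vectors `Λ⁻`. -/
noncomputable def Evec (ε : ℝ) : Fin 3 → Matrix (Fin 4) (Fin 4) ℝ :=
  ![(Real.sqrt 2)⁻¹ • (wedge (stdb 0) (stdb 1) + ε • wedge (stdb 2) (stdb 3)),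
    (Real.sqrt 2)⁻¹ • (wedge (stdb 0) (stdb 2) + ε • wedge (stdb 1) (stdb 3)),
    (Real.sqrt 2)⁻¹ • (wedge (stdb 0) (stdb 3) - ε • wedge (stdb 1) (stdb 2))]

/-- The space `Λ⁺` of self-dual 2-vectors. -/
def LambdaPlus : Submodule ℝ (Matrix (Fin 4) (Fin 4) ℝ) :=
  Submodule.span ℝ (Set.range (Evec 1))

/-- The space `Λ⁻` of anti-self-dual 2-vectors. -/
def LambdaMinus : Submodule ℝ (Matrix (Fin 4) (Fin 4) ℝ) :=
  Submodule.span ℝ (Set.range (Evec (-1)))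

/-- Self-dual: the Weyl form vanishes identically on `Λ⁻`. -/
def SelfDual (A : V4 → V4 → V4 → V4 → ℝ) : Prop :=
  ∀ α ∈ LambdaMinus, ∀ β ∈ LambdaMinus, weylForm A α β = 0

/-- Anti-self-dual: the Weyl form vanishes identically on `Λ⁺`. -/
def AntiSelfDual (A : V4 → V4 → V4 → V4 → ℝ) : Prop :=
  ∀ α ∈ LambdaPlus, ∀ β ∈ LambdaPlus, weylForm A α β = 0

/-- The curvature tensor `A⁰` of constant sectional curvature `+1`. -/
def Acurv0 (x y z v : V4) : ℝ := nip y z * nip x v - nip x z * nip y v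

/-- The curvature tensor `A^Ψ` of a skew-adjoint endomorphism `Ψ`. -/
def AcurvPsi (Ψ : Matrix (Fin 4) (Fin 4) ℝ) (x y z v : V4) : ℝ :=
  nip (Ψ.mulVec y) z * nip (Ψ.mulVec x) v - nip (Ψ.mulVec x) z * nip (Ψ.mulVec y) v
    - 2 * nip (Ψ.mulVec x) y * nip (Ψ.mulVec z) v

/-- Skew-adjoint with respect to the neutral inner product. -/
def SkewAdjointM (Ψ : Matrix (Fin 4) (Fin 4) ℝ) : Prop :=
  ∀ x y : V4, nip (Ψ.mulVec x) y = - nip x (Ψ.mulVec y)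

/-- An orthogonal complex structure: skew-adjoint with `J² = −id`. -/
def OrthComplexStructure (J : Matrix (Fin 4) (Fin 4) ℝ) : Prop :=
  SkewAdjointM J ∧ J * J = -1

/-- An adapted paracomplex structure: skew-adjoint with `P² = id`. -/
def AdaptedParaStructure (P : Matrix (Fin 4) (Fin 4) ℝ) : Prop :=
  SkewAdjointM P ∧ P * P = 1

/-- A paraquaternionic structure. -/
def Paraquaternionic (P₁ P₂ P₃ : Matrix (Fin 4) (Fin 4) ℝ) : Prop :=
  SkewAdjointM P₁ ∧ SkewAdjointM P₂ ∧ SkewAdjointM P₃ ∧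
  P₁ * P₁ = -1 ∧ P₂ * P₂ = 1 ∧ P₃ * P₃ = 1 ∧
  P₁ * P₂ + P₂ * P₁ = 0 ∧ P₁ * P₃ + P₃ * P₁ = 0 ∧ P₂ * P₃ + P₃ * P₂ = 0

/-- The standard paraquaternionic structure: `Ψ₁`. -/
def psi1 : Matrix (Fin 4) (Fin 4) ℝ :=
  !![0, 1, 0, 0; -1, 0, 0, 0; 0, 0, 0, -1; 0, 0, 1, 0]

/-- The standard paraquaternionic structure: `Ψ₂`. -/
def psi2 : Matrix (Fin 4) (Fin 4) ℝ :=
  !![0, 0, 1, 0; 0, 0, 0, 1; 1, 0, 0, 0; 0, 1, 0, 0]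

/-- The standard paraquaternionic structure: `Ψ₃`. -/
def psi3 : Matrix (Fin 4) (Fin 4) ℝ :=
  !![0, 0, 0, 1; 0, 0, -1, 0; 0, -1, 0, 0; 1, 0, 0, 0]

/-- The curvature tensor `A_{κ₀,ξ}` of the Gilkey–Ivanova ansatz. -/
noncomputable def AKxi (κ₀ ξ11 ξ12 ξ13 ξ22 ξ23 ξ33 : ℝ) : V4 → V4 → V4 → V4 → ℝ :=
  fun x y z w =>
    κ₀ * Acurv0 x y z w + (1/3) *
      (ξ11 * AcurvPsi psi1 x y z w + ξ22 * AcurvPsi psi2 x y z w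
        + ξ33 * AcurvPsi psi3 x y z w + ξ12 * AcurvPsi (psi1 + psi2) x y z w
        + ξ13 * AcurvPsi (psi1 + psi3) x y z w + ξ23 * AcurvPsi (psi2 + psi3) x y z w)

/-- The `3 × 3` matrix `𝒥_{κ₀,ξ}`. -/
def Jmat (κ₀ ξ11 ξ12 ξ13 ξ22 ξ23 ξ33 : ℝ) : Matrix (Fin 3) (Fin 3) ℝ :=
  κ₀ • (1 : Matrix (Fin 3) (Fin 3) ℝ) +
    !![ξ11 + ξ12 + ξ13, -ξ12, -ξ13;
       ξ12, -ξ22 - ξ12 - ξ23, -ξ23;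
       ξ13, -ξ23, -ξ33 - ξ13 - ξ23]

/-- An oriented orthonormal basis of `(V,⟨·,·⟩)`: `b₁, b₂` timelike, `b₃, b₄` spacelike,
mutually orthogonal, with positively-oriented change-of-basis matrix. -/
def OrientedONB (b : Fin 4 → V4) : Prop :=
  (∀ i j : Fin 4, nip (b i) (b j) = if i = j then eps i else 0) ∧
  0 < (Matrix.of fun i j : Fin 4 => b j i).det

/-!
In the frame `x, Ψ₁x, Ψ₂x, Ψ₃x` the Jacobi operator of `A_{κ₀,ξ}` acts as
`⟨x,x⟩ (0 ⊕ 𝒥_{κ₀,ξ})`. Indeed `J_{A⁰}(x)y = ⟨x,x⟩y − ⟨y,x⟩x` and `J_{A^Ψ}(x)y = 3⟨y,Ψx⟩Ψx`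
for skew-adjoint `Ψ`, while the paraquaternionic relations make `Ψ₁x, Ψ₂x, Ψ₃x` orthogonal to
each other and to `x`, with `⟨Ψ₁x,Ψ₁x⟩ = ⟨x,x⟩` and `⟨Ψ₂x,Ψ₂x⟩ = ⟨Ψ₃x,Ψ₃x⟩ = −⟨x,x⟩`.
The frame has determinant `−⟨x,x⟩²`, so for `⟨x,x⟩ = ±1` it is a basis and `J(x)` is
conjugate to `±(0 ⊕ 𝒥_{κ₀,ξ})`, whatever `x` is.
-/

lemma nip_comm (x y : V4) : nip x y = nip y x := by
  simp only [nip]; ring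

lemma nip_add_left (x x' y : V4) : nip (x + x') y = nip x y + nip x' y := by
  simp only [nip, Pi.add_apply]; ring

lemma nip_add_right (x y y' : V4) : nip x (y + y') = nip x y + nip x y' := by
  simp only [nip, Pi.add_apply]; ring

lemma nip_neg_right (x y : V4) : nip x (-y) = -nip x y := by
  simp only [nip, Pi.neg_apply]; ring

lemma eps_mul_nip_stdb (v : V4) (i : Fin 4) : eps i * nip v (stdb i) = v i := by
  fin_cases i <;> simp [nip, stdb, eps]

lemma sum_smul_stdb (y : V4) : ∑ j, y j • stdb j = y := by
  ext i; simp [stdb, Finset.sum_apply]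

namespace SkewAdjointM

variable {Ψ Φ : Matrix (Fin 4) (Fin 4) ℝ}

lemma nip_mulVec_self (hΨ : SkewAdjointM Ψ) (x : V4) : nip (Ψ *ᵥ x) x = 0 := by
  have := hΨ x x
  rw [nip_comm x] at this
  linarith

lemma nip_self_mulVec (hΨ : SkewAdjointM Ψ) (x : V4) : nip x (Ψ *ᵥ x) = 0 := by
  rw [nip_comm, hΨ.nip_mulVec_self]

lemma add (hΨ : SkewAdjointM Ψ) (hΦ : SkewAdjointM Φ) : SkewAdjointM (Ψ + Φ) := by
  intro x y
  rw [add_mulVec, add_mulVec, nip_add_left, nip_add_right, hΨ, hΦ]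
  ring

lemma nip_mulVec_mulVec (hΨ : SkewAdjointM Ψ) (Φ : Matrix (Fin 4) (Fin 4) ℝ) (x y : V4) :
    nip (Ψ *ᵥ x) (Φ *ᵥ y) = -nip x ((Ψ * Φ) *ᵥ y) := by
  rw [hΨ, mulVec_mulVec]

lemma nip_mulVec_mulVec_of_anticomm (hΨ : SkewAdjointM Ψ) (hΦ : SkewAdjointM Φ)
    (hΨΦ : Ψ * Φ + Φ * Ψ = 0) (x : V4) : nip (Ψ *ᵥ x) (Φ *ᵥ x) = 0 := by
  have hΦΨ := hΦ.nip_mulVec_mulVec Ψ x x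
  rw [eq_neg_of_add_eq_zero_right hΨΦ, neg_mulVec, nip_neg_right, neg_neg] at hΦΨ
  linarith [hΨ.nip_mulVec_mulVec Φ x x, nip_comm (Ψ *ᵥ x) (Φ *ᵥ x)]

end SkewAdjointM

lemma Paraquaternionic.nip_mulVec_mulVec {P : Fin 3 → Matrix (Fin 4) (Fin 4) ℝ}
    (hP : Paraquaternionic (P 0) (P 1) (P 2)) (i j : Fin 3) (x : V4) :
    nip (P i *ᵥ x) (P j *ᵥ x) = if i = j then ![1, -1, -1] i * nip x x else 0 := by
  obtain ⟨h1, h2, h3, h11, h22, h33, h12, h13, h23⟩ := hP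
  have h21 : P 1 * P 0 + P 0 * P 1 = 0 := by rw [add_comm, h12]
  have h31 : P 2 * P 0 + P 0 * P 2 = 0 := by rw [add_comm, h13]
  have h32 : P 2 * P 1 + P 1 * P 2 = 0 := by rw [add_comm, h23]
  -- off the diagonal anticommutation kills the entry; on it, `⟨Pᵢx, Pᵢx⟩ = -⟨x, Pᵢ²x⟩`
  fin_cases i <;> fin_cases j <;> first
    | simp [h1.nip_mulVec_mulVec_of_anticomm h2 h12, h2.nip_mulVec_mulVec_of_anticomm h1 h21,
        h1.nip_mulVec_mulVec_of_anticomm h3 h13, h3.nip_mulVec_mulVec_of_anticomm h1 h31,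
        h2.nip_mulVec_mulVec_of_anticomm h3 h23, h3.nip_mulVec_mulVec_of_anticomm h2 h32]; done
    | simp [h1.nip_mulVec_mulVec, h2.nip_mulVec_mulVec, h3.nip_mulVec_mulVec, h11, h22, h33,
        neg_mulVec, nip_neg_right]

def psi : Fin 3 → Matrix (Fin 4) (Fin 4) ℝ := ![psi1, psi2, psi3]

lemma paraquaternionic_psi : Paraquaternionic psi1 psi2 psi3 := by
  refine ⟨?_, ?_, ?_, ?_, ?_, ?_, ?_, ?_, ?_⟩
  iterate 3
    intro x y
    simp [psi1, psi2, psi3, nip, mulVec, dotProduct, Fin.sum_univ_four]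
    ring
  all_goals
    ext i j
    fin_cases i <;> fin_cases j <;> simp [psi1, psi2, psi3, mul_apply, Fin.sum_univ_four]

lemma isMultilinear_Acurv0 : IsMultilinear Acurv0 := by
  refine ⟨?_, ?_, ?_, ?_⟩ <;> intros <;> simp only [Acurv0, nip, Pi.add_apply, Pi.smul_apply,
    smul_eq_mul] <;> ring

lemma isMultilinear_AcurvPsi (Ψ : Matrix (Fin 4) (Fin 4) ℝ) : IsMultilinear (AcurvPsi Ψ) := by
  refine ⟨?_, ?_, ?_, ?_⟩ <;> intros <;> simp only [AcurvPsi, nip, mulVec_add, mulVec_smul,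
    Pi.add_apply, Pi.smul_apply, smul_eq_mul] <;> ring

lemma IsMultilinear.map_sum_left {A : V4 → V4 → V4 → V4 → ℝ} (hA : IsMultilinear A)
    {ι : Type*} (s : Finset ι) (c : ι → ℝ) (f : ι → V4) (y z w : V4) :
    A (∑ j ∈ s, c j • f j) y z w = ∑ j ∈ s, c j * A (f j) y z w := by
  classical
  induction s using Finset.induction_on with
  | empty =>
    have h := hA.1 (-1) 0 0 y z w
    simp only [smul_zero, add_zero, neg_mul, one_mul, neg_add_cancel] at h
    simpa using h
  | insert a s ha ih => rw [Finset.sum_insert ha, Finset.sum_insert ha, hA.1, ih]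

lemma jacobi_mulVec {A : V4 → V4 → V4 → V4 → ℝ} (hA : IsMultilinear A) (x y : V4) :
    jacobi A x *ᵥ y = fun i => eps i * A y x x (stdb i) := by
  ext i
  conv_rhs => rw [← sum_smul_stdb y, hA.map_sum_left]
  simp only [mulVec, dotProduct, jacobi, of_apply, Finset.mul_sum]
  exact Finset.sum_congr rfl fun j _ => by ring

lemma jacobi_add (A B : V4 → V4 → V4 → V4 → ℝ) (x : V4) :
    jacobi (A + B) x = jacobi A x + jacobi B x := by
  ext i j; simp only [jacobi, of_apply, Pi.add_apply, Matrix.add_apply]; ring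

lemma jacobi_smul (c : ℝ) (A : V4 → V4 → V4 → V4 → ℝ) (x : V4) :
    jacobi (c • A) x = c • jacobi A x := by
  ext i j; simp only [jacobi, of_apply, Pi.smul_apply, Matrix.smul_apply, smul_eq_mul]; ring

lemma jacobi_Acurv0_mulVec (x y : V4) :
    jacobi Acurv0 x *ᵥ y = nip x x • y - nip y x • x := by
  ext i
  rw [jacobi_mulVec isMultilinear_Acurv0]
  simp only [Acurv0, Pi.sub_apply, Pi.smul_apply, smul_eq_mul]
  rw [← eps_mul_nip_stdb y i, ← eps_mul_nip_stdb x i]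
  ring

lemma jacobi_AcurvPsi_mulVec {Ψ : Matrix (Fin 4) (Fin 4) ℝ} (hΨ : SkewAdjointM Ψ) (x y : V4) :
    jacobi (AcurvPsi Ψ) x *ᵥ y = (3 * nip y (Ψ *ᵥ x)) • (Ψ *ᵥ x) := by
  ext i
  rw [jacobi_mulVec (isMultilinear_AcurvPsi Ψ)]
  simp only [AcurvPsi, hΨ.nip_mulVec_self, hΨ y x, Pi.smul_apply, smul_eq_mul]
  rw [← eps_mul_nip_stdb (Ψ *ᵥ x) i]
  ring

def zeroDirectSum {R : Type*} [Zero R] {n : ℕ} (M : Matrix (Fin n) (Fin n) R) :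
    Matrix (Fin (n + 1)) (Fin (n + 1)) R :=
  Matrix.of (Fin.cons 0 fun i => Fin.cons 0 (M i))

lemma mul_transpose_of_eq_of_mulVec_eq_sum {R n : Type*} [CommSemiring R] [Fintype n]
    (M C : Matrix n n R) (f : n → n → R) (h : ∀ j, M *ᵥ f j = ∑ k, C k j • f k) :
    M * (Matrix.of f)ᵀ = (Matrix.of f)ᵀ * C := by
  ext i j
  have hij := congrFun (h j) i
  simp only [mulVec, dotProduct, Finset.sum_apply, Pi.smul_apply, smul_eq_mul] at hij
  simp only [mul_apply, transpose_apply, of_apply, hij]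
  exact Finset.sum_congr rfl fun k _ => mul_comm _ _

def adaptedFrame (x : V4) : Fin 4 → V4 := Fin.cons x fun k => psi k *ᵥ x

lemma det_adaptedFrame (x : V4) : (Matrix.of (adaptedFrame x))ᵀ.det = -nip x x ^ 2 := by
  have hrows : Matrix.of (adaptedFrame x) =
      !![x 0, x 1, x 2, x 3; x 1, -x 0, -x 3, x 2; x 2, x 3, x 0, x 1; x 3, -x 2, -x 1, x 0] := by
    have hframe : adaptedFrame x = ![x, psi1 *ᵥ x, psi2 *ᵥ x, psi3 *ᵥ x] := by
      funext k; fin_cases k <;> rfl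
    ext i j
    fin_cases i <;> fin_cases j <;>
      simp [hframe, psi1, psi2, psi3, dotProduct, Fin.sum_univ_four]
  rw [det_transpose, hrows, det_succ_row_zero]
  simp [Fin.sum_univ_succ, det_fin_three, Fin.succAbove, nip]
  ring

lemma similarMat4_iff_isConj (M N : Matrix (Fin 4) (Fin 4) ℝ) :
    SimilarMat4 M N ↔ IsConj N M := by
  constructor
  · rintro ⟨L, hL, h⟩
    exact ⟨((Matrix.isUnit_iff_isUnit_det L).mpr hL).unit, h.symm⟩
  · rintro ⟨L, h⟩
    exact ⟨L, (Matrix.isUnit_iff_isUnit_det _).mp L.isUnit, h.symm⟩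

section Ansatz

variable (κ₀ ξ11 ξ12 ξ13 ξ22 ξ23 ξ33 : ℝ)

lemma AKxi_eq : AKxi κ₀ ξ11 ξ12 ξ13 ξ22 ξ23 ξ33 = κ₀ • Acurv0 + (1 / 3 : ℝ) •
      (ξ11 • AcurvPsi psi1 + ξ22 • AcurvPsi psi2 + ξ33 • AcurvPsi psi3
        + ξ12 • AcurvPsi (psi1 + psi2) + ξ13 • AcurvPsi (psi1 + psi3)
        + ξ23 • AcurvPsi (psi2 + psi3)) :=
  rfl

lemma jacobi_AKxi_mulVec (x y : V4) :
    jacobi (AKxi κ₀ ξ11 ξ12 ξ13 ξ22 ξ23 ξ33) x *ᵥ y =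
      κ₀ • (nip x x • y - nip y x • x)
        + (ξ11 * nip y (psi1 *ᵥ x)) • (psi1 *ᵥ x)
        + (ξ22 * nip y (psi2 *ᵥ x)) • (psi2 *ᵥ x)
        + (ξ33 * nip y (psi3 *ᵥ x)) • (psi3 *ᵥ x)
        + (ξ12 * nip y ((psi1 + psi2) *ᵥ x)) • ((psi1 + psi2) *ᵥ x)
        + (ξ13 * nip y ((psi1 + psi3) *ᵥ x)) • ((psi1 + psi3) *ᵥ x)
        + (ξ23 * nip y ((psi2 + psi3) *ᵥ x)) • ((psi2 + psi3) *ᵥ x) := by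
  obtain ⟨h1, h2, h3, -⟩ := paraquaternionic_psi
  simp only [AKxi_eq, jacobi_add, jacobi_smul, add_mulVec, smul_mulVec, jacobi_Acurv0_mulVec,
    jacobi_AcurvPsi_mulVec h1, jacobi_AcurvPsi_mulVec h2, jacobi_AcurvPsi_mulVec h3,
    jacobi_AcurvPsi_mulVec (h1.add h2), jacobi_AcurvPsi_mulVec (h1.add h3),
    jacobi_AcurvPsi_mulVec (h2.add h3)]
  module

lemma jacobi_AKxi_mulVec_self (x : V4) :
    jacobi (AKxi κ₀ ξ11 ξ12 ξ13 ξ22 ξ23 ξ33) x *ᵥ x = 0 := by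
  obtain ⟨h1, h2, h3, -⟩ := paraquaternionic_psi
  simp [jacobi_AKxi_mulVec, h1.nip_self_mulVec, h2.nip_self_mulVec, h3.nip_self_mulVec,
    (h1.add h2).nip_self_mulVec, (h1.add h3).nip_self_mulVec, (h2.add h3).nip_self_mulVec]

lemma jacobi_AKxi_mulVec_psi (x : V4) (j : Fin 3) :
    jacobi (AKxi κ₀ ξ11 ξ12 ξ13 ξ22 ξ23 ξ33) x *ᵥ (psi j *ᵥ x) =
      nip x x • ∑ k, Jmat κ₀ ξ11 ξ12 ξ13 ξ22 ξ23 ξ33 k j • (psi k *ᵥ x) := by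
  have hskew (k : Fin 3) : SkewAdjointM (psi k) := by
    obtain ⟨h1, h2, h3, -⟩ := paraquaternionic_psi
    fin_cases k <;> assumption
  rw [jacobi_AKxi_mulVec]
  simp only [show psi1 = psi 0 from rfl, show psi2 = psi 1 from rfl, show psi3 = psi 2 from rfl,
    add_mulVec, nip_add_right, Paraquaternionic.nip_mulVec_mulVec (P := psi) paraquaternionic_psi]
  fin_cases j <;>
    simp [(hskew _).nip_mulVec_self, Fin.sum_univ_three, Jmat] <;>
    module

lemma jacobi_AKxi_mul_adaptedFrame (x : V4) :
    jacobi (AKxi κ₀ ξ11 ξ12 ξ13 ξ22 ξ23 ξ33) x * (Matrix.of (adaptedFrame x))ᵀ =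
      (Matrix.of (adaptedFrame x))ᵀ *
        (nip x x • zeroDirectSum (Jmat κ₀ ξ11 ξ12 ξ13 ξ22 ξ23 ξ33)) := by
  refine mul_transpose_of_eq_of_mulVec_eq_sum _ _ _ fun j => ?_
  rw [Fin.sum_univ_succ]
  refine Fin.cases ?_ (fun j => ?_) j <;>
    simp only [adaptedFrame, zeroDirectSum, Matrix.smul_apply, of_apply, Fin.cons_zero,
      Fin.cons_succ]
  · simp [jacobi_AKxi_mulVec_self]
  · rw [jacobi_AKxi_mulVec_psi, Finset.smul_sum]
    simp [smul_smul]

lemma isConj_jacobi_AKxi {x : V4} (hx : nip x x ≠ 0) :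
    IsConj (nip x x • zeroDirectSum (Jmat κ₀ ξ11 ξ12 ξ13 ξ22 ξ23 ξ33))
      (jacobi (AKxi κ₀ ξ11 ξ12 ξ13 ξ22 ξ23 ξ33) x) := by
  have hdet : IsUnit (Matrix.of (adaptedFrame x))ᵀ.det := by
    rw [det_adaptedFrame, isUnit_iff_ne_zero]
    simpa using hx
  exact ⟨((Matrix.isUnit_iff_isUnit_det _).mpr hdet).unit,
    (jacobi_AKxi_mul_adaptedFrame κ₀ ξ11 ξ12 ξ13 ξ22 ξ23 ξ33 x).symm⟩

lemma similarMat4_jacobi_AKxi {u w : V4} (huw : nip u u = nip w w) (hu : nip u u ≠ 0) :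
    SimilarMat4 (jacobi (AKxi κ₀ ξ11 ξ12 ξ13 ξ22 ξ23 ξ33) u)
      (jacobi (AKxi κ₀ ξ11 ξ12 ξ13 ξ22 ξ23 ξ33) w) := by
  rw [similarMat4_iff_isConj]
  have hw := isConj_jacobi_AKxi κ₀ ξ11 ξ12 ξ13 ξ22 ξ23 ξ33 (huw ▸ hu)
  rw [← huw] at hw
  exact hw.symm.trans (isConj_jacobi_AKxi κ₀ ξ11 ξ12 ξ13 ξ22 ξ23 ξ33 hu)

end Ansatz

/-- Lemma 3.1 (2): the model `𝔐_{κ₀,ξ}` is spacelike and timelike Jordan Osserman. -/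
theorem ansatz_is_jordan_osserman (κ₀ ξ11 ξ12 ξ13 ξ22 ξ23 ξ33 : ℝ) :
    SpacelikeJordanOsserman (AKxi κ₀ ξ11 ξ12 ξ13 ξ22 ξ23 ξ33) ∧
    TimelikeJordanOsserman (AKxi κ₀ ξ11 ξ12 ξ13 ξ22 ξ23 ξ33) :=
  ⟨fun _ _ hu hw => similarMat4_jacobi_AKxi _ _ _ _ _ _ _ (hu.trans hw.symm) (by simp [hu]),
    fun _ _ hu hw => similarMat4_jacobi_AKxi _ _ _ _ _ _ _ (hu.trans hw.symm) (by simp [hu])⟩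
end

section
/- Let (Ψ₁,Ψ₂,Ψ₃) be the standard paraquaternionic structure on V, let a, c ∈ ℝ and b ≠ 0, and let A = (1/3)((a−b)A^{Ψ₁} + (−b−a)A^{Ψ₂} + bA^{Ψ₁+Ψ₂} + cA^{Ψ₃}). Then the model 𝔐 = (V,⟨·,·⟩,A) (which is of Type Ib, i.e. its Jacobi operators on unit spacelike vectors have a pair of complex conjugate eigenvalues a ± ib) is not null Jordan Osserman. -/
open Matrix BigOperators

/-!
For skew-adjoint `Ψ` the Jacobi operator of `A^Ψ` at `x` is `y ↦ 3⟨y, Ψx⟩ Ψx`, so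
`J_A(x) = Σ Q_kl ⟨·, Ψ_l x⟩ Ψ_k x` with `Q = [[a, b, 0], [b, -a, 0], [0, 0, c]]`, the `b`
entries coming from expanding `A^{Ψ₁+Ψ₂}`. On the null curve `x(u) = (1 + u², 0, 1 - u², 2u)`
the three vectors `Ψ_k x` lie in the totally isotropic plane spanned by `x` and `Ψ₁x`, and in
that basis `J_A(x(u))` is represented by a `2 × 2` matrix `G(u)` of the same rank; rank is a
similarity invariant. The determinant of `G(u)` is continuous and equals `±32bc` at `u = ∓1`,
so it vanishes somewhere, where `J_A` has rank at most one; as `b ≠ 0` it cannot vanish both at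
`u = 1` and at `u = 0`, where it is `-a(a + c) - b²`, so somewhere `J_A` has rank two.
-/

namespace Matrix

lemma rank_lt_card_of_det_eq_zero {K n : Type*} [Field K] [Fintype n] [DecidableEq n]
    {M : Matrix n n K} (h : M.det = 0) : M.rank < Fintype.card n := by
  obtain ⟨v, hv, hMv⟩ := exists_mulVec_eq_zero_iff.mpr h
  have hker : 0 < Module.finrank K (LinearMap.ker M.mulVecLin) :=
    Module.finrank_pos_iff_exists_ne_zero.mpr ⟨⟨v, hMv⟩, fun h => hv (congrArg Subtype.val h)⟩
  have := LinearMap.finrank_range_add_finrank_ker M.mulVecLin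
  rw [Module.finrank_fintype_fun_eq_card] at this
  rw [rank]
  omega

lemma rank_mul_mul_eq_of_mul_eq_one {R : Type*} [CommSemiring R] [StrongRankCondition R]
    {m n k l : Type*} [Fintype m] [Fintype n] [Fintype k] [Fintype l] [DecidableEq k]
    [DecidableEq l] {B : Matrix m k R} {C : Matrix k l R} {D : Matrix l n R} {S : Matrix k m R}
    {T : Matrix n l R} (hS : S * B = 1) (hT : D * T = 1) : (B * C * D).rank = C.rank := by
  refine le_antisymm ((rank_mul_le_left _ _).trans (rank_mul_le_right _ _)) ?_
  calc C.rank = (S * (B * C * D) * T).rank := by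
        rw [← Matrix.mul_assoc, ← Matrix.mul_assoc, hS, Matrix.one_mul, Matrix.mul_assoc, hT,
          Matrix.mul_one]
    _ ≤ (B * C * D).rank := (rank_mul_le_left _ _).trans (rank_mul_le_right _ _)

end Matrix

lemma SimilarMat4.rank_eq {M N : Matrix (Fin 4) (Fin 4) ℝ} (h : SimilarMat4 M N) :
    M.rank = N.rank := by
  obtain ⟨L, hL, hML⟩ := h
  rw [← Matrix.rank_mul_eq_left_of_isUnit_det L M hL, hML,
    Matrix.rank_mul_eq_right_of_isUnit_det L N hL]

lemma nip_stdb_left (i : Fin 4) (w : V4) : nip (stdb i) w = eps i * w i := by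
  fin_cases i <;> simp [nip, stdb, eps]

lemma nip_stdb_right (w : V4) (i : Fin 4) : nip w (stdb i) = eps i * w i := by
  rw [nip_comm, nip_stdb_left]

namespace SkewAdjointM

variable {Ψ Φ : Matrix (Fin 4) (Fin 4) ℝ}

lemma acurvPsi_jacobi (hΨ : SkewAdjointM Ψ) (x y z : V4) :
    AcurvPsi Ψ y x x z = 3 * nip y (Ψ *ᵥ x) * nip (Ψ *ᵥ x) z := by
  rw [AcurvPsi, hΨ.nip_mulVec_self, hΨ y x]
  ring

end SkewAdjointM

lemma skewAdjointM_psi1 : SkewAdjointM psi1 := by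
  intro x y; simp [nip, psi1, mulVec, dotProduct, Fin.sum_univ_four]; ring

lemma skewAdjointM_psi2 : SkewAdjointM psi2 := by
  intro x y; simp [nip, psi2, mulVec, dotProduct, Fin.sum_univ_four]; ring

lemma skewAdjointM_psi3 : SkewAdjointM psi3 := by
  intro x y; simp [nip, psi3, mulVec, dotProduct, Fin.sum_univ_four]; ring

noncomputable def typeIbModel (a b c : ℝ) : V4 → V4 → V4 → V4 → ℝ :=
  fun x y z w => (1/3) * ((a - b) * AcurvPsi psi1 x y z w
    + (-b - a) * AcurvPsi psi2 x y z w + b * AcurvPsi (psi1 + psi2) x y z w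
    + c * AcurvPsi psi3 x y z w)

def typeIbForm (a b c : ℝ) : Matrix (Fin 3) (Fin 3) ℝ := !![a, b, 0; b, -a, 0; 0, 0, c]

def paraFrame (x : V4) : Matrix (Fin 4) (Fin 3) ℝ :=
  Matrix.of fun i k => (![psi1, psi2, psi3] k *ᵥ x) i

lemma jacobi_typeIbModel (a b c : ℝ) (x : V4) :
    jacobi (typeIbModel a b c) x
      = paraFrame x * typeIbForm a b c * (paraFrame x)ᵀ * diagonal eps := by
  ext i j
  simp only [jacobi, typeIbModel, of_apply,
    skewAdjointM_psi1.acurvPsi_jacobi, skewAdjointM_psi2.acurvPsi_jacobi,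
    skewAdjointM_psi3.acurvPsi_jacobi, (skewAdjointM_psi1.add skewAdjointM_psi2).acurvPsi_jacobi,
    nip_stdb_left, nip_stdb_right, add_mulVec, Pi.add_apply]
  simp [mul_apply, Fin.sum_univ_three, paraFrame, typeIbForm, diagonal_apply]
  fin_cases i <;> simp [eps] <;> ring

def nullCurve (u : ℝ) : V4 := ![1 + u ^ 2, 0, 1 - u ^ 2, 2 * u]

lemma nip_nullCurve (u : ℝ) : nip (nullCurve u) (nullCurve u) = 0 := by
  simp only [nip, nullCurve, Fin.isValue, cons_val_zero, cons_val_one, cons_val]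
  ring

lemma nullCurve_ne_zero (u : ℝ) : nullCurve u ≠ 0 := by
  intro h
  have := congrFun h 0
  simp only [nullCurve, Fin.isValue, cons_val_zero, Pi.zero_apply] at this
  nlinarith

def nullCurveBasis (u : ℝ) : Matrix (Fin 4) (Fin 2) ℝ :=
  Matrix.of fun i k => ![nullCurve u, psi1 *ᵥ nullCurve u] k i

def nullCurveCoord (u : ℝ) : Matrix (Fin 2) (Fin 3) ℝ :=
  !![0, 1 - u ^ 2, 2 * u; 1 + u ^ 2, -(2 * u), 1 - u ^ 2]

lemma smul_paraFrame_nullCurve (u : ℝ) :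
    (1 + u ^ 2) • paraFrame (nullCurve u) = nullCurveBasis u * nullCurveCoord u := by
  ext i k
  fin_cases i <;> fin_cases k <;>
    simp [paraFrame, nullCurveBasis, nullCurveCoord, nullCurve, psi1, psi2, psi3, mul_apply,
      mulVec, dotProduct, Fin.sum_univ_four] <;> ring

def curveCoeff (a b c u : ℝ) : Matrix (Fin 2) (Fin 2) ℝ :=
  nullCurveCoord u * typeIbForm a b c * (nullCurveCoord u)ᵀ

lemma rank_jacobi_nullCurve (a b c u : ℝ) :
    (jacobi (typeIbModel a b c) (nullCurve u)).rank = (curveCoeff a b c u).rank := by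
  have hu : 1 + u ^ 2 ≠ 0 := by positivity
  rw [← rank_smul_of_mem_nonZeroDivisors _ (mem_nonZeroDivisors_of_ne_zero (pow_ne_zero 2 hu))]
  have hfactor : (1 + u ^ 2) ^ 2 • jacobi (typeIbModel a b c) (nullCurve u)
      = nullCurveBasis u * curveCoeff a b c u * ((nullCurveBasis u)ᵀ * diagonal eps) := by
    calc _ = ((1 + u ^ 2) • paraFrame (nullCurve u)) * typeIbForm a b c
          * ((1 + u ^ 2) • paraFrame (nullCurve u))ᵀ * diagonal eps := by
          rw [jacobi_typeIbModel, pow_two, ← smul_smul]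
          simp only [transpose_smul, Matrix.smul_mul, Matrix.mul_smul]
      _ = _ := by
          rw [smul_paraFrame_nullCurve, transpose_mul]
          simp only [curveCoeff, Matrix.mul_assoc]
  rw [hfactor]
  refine rank_mul_mul_eq_of_mul_eq_one (S := (1 + u ^ 2)⁻¹ • !![1, 0, 0, 0; 0, -1, 0, 0])
    (T := (1 + u ^ 2)⁻¹ • !![-1, 0; 0, 1; 0, 0; 0, 0]) ?_ ?_
  · ext i k
    fin_cases i <;> fin_cases k <;>
      simp [nullCurveBasis, nullCurve, psi1, mul_apply, Fin.sum_univ_four] <;> grind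
  · ext i k
    fin_cases i <;> fin_cases k <;>
      simp [nullCurveBasis, nullCurve, psi1, eps, mul_apply, Fin.sum_univ_four] <;> grind

lemma continuous_det_curveCoeff (a b c : ℝ) : Continuous fun u => (curveCoeff a b c u).det := by
  unfold curveCoeff nullCurveCoord
  fun_prop

lemma det_curveCoeff_zero (a b c : ℝ) : (curveCoeff a b c 0).det = -(a * (a + c)) - b ^ 2 := by
  simp [curveCoeff, nullCurveCoord, typeIbForm, det_fin_two, vecMul, dotProduct, Fin.sum_univ_three]
  ring

lemma det_curveCoeff_one (a b c : ℝ) : (curveCoeff a b c 1).det = -(32 * b * c) := by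
  simp [curveCoeff, nullCurveCoord, typeIbForm, det_fin_two, vecMul, dotProduct, Fin.sum_univ_three]
  ring

lemma det_curveCoeff_neg_one (a b c : ℝ) : (curveCoeff a b c (-1)).det = 32 * b * c := by
  simp [curveCoeff, nullCurveCoord, typeIbForm, det_fin_two, vecMul, dotProduct, Fin.sum_univ_three]
  ring

lemma exists_det_curveCoeff_eq_zero (a b c : ℝ) : ∃ u, (curveCoeff a b c u).det = 0 := by
  have hsign : (0 : ℝ) ∈ Set.uIcc (curveCoeff a b c (-1)).det (curveCoeff a b c 1).det := by
    rw [det_curveCoeff_neg_one, det_curveCoeff_one, Set.mem_uIcc]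
    rcases le_total (b * c) 0 with h | h
    · exact Or.inl ⟨by linarith, by linarith⟩
    · exact Or.inr ⟨by linarith, by linarith⟩
  obtain ⟨u, -, hu⟩ := intermediate_value_uIcc (continuous_det_curveCoeff a b c).continuousOn hsign
  exact ⟨u, hu⟩

lemma exists_det_curveCoeff_ne_zero (a c : ℝ) {b : ℝ} (hb : b ≠ 0) :
    ∃ u, (curveCoeff a b c u).det ≠ 0 := by
  by_contra! h
  have hc : c = 0 := by simpa [det_curveCoeff_one, hb] using h 1
  have h₀ := h 0
  rw [det_curveCoeff_zero, hc] at h₀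
  have : 0 < b ^ 2 := by positivity
  nlinarith [sq_nonneg a]

/-- Section 3.6: no Type Ib model is null Jordan Osserman. -/
theorem type_Ib_not_null_jordan_osserman (a b c : ℝ) (hb : b ≠ 0)
    (A : V4 → V4 → V4 → V4 → ℝ)
    (hA : A = fun x y z w => (1/3) * ((a - b) * AcurvPsi psi1 x y z w
      + (-b - a) * AcurvPsi psi2 x y z w + b * AcurvPsi (psi1 + psi2) x y z w
      + c * AcurvPsi psi3 x y z w)) :
    ¬ NullJordanOsserman A := by
  change A = typeIbModel a b c at hA
  subst hA
  intro h
  obtain ⟨u₀, h₀⟩ := exists_det_curveCoeff_eq_zero a b c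
  obtain ⟨u₁, h₁⟩ := exists_det_curveCoeff_ne_zero a c hb
  have hrank := (h _ _ (nullCurve_ne_zero u₀) (nullCurve_ne_zero u₁)
    (nip_nullCurve u₀) (nip_nullCurve u₁)).rank_eq
  rw [rank_jacobi_nullCurve, rank_jacobi_nullCurve, rank_of_det_ne_zero h₁] at hrank
  have := rank_lt_card_of_det_eq_zero h₀
  simp only [Fintype.card_fin] at this hrank
  omega
end
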